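/- If in addition E[Y1 | Z = 1] = E[Y1], E[Y0 | Z' = 0, Z = 0] = E[Y0] and E[Y1 | Z' = 1, Z = 0] = E[Y1] (the identities implied by the paper's full unconfoundedness assumption), then the treatment diffusion bias satisfies b = (E[Y0] − E[Y1]) · ρ̄ = −τ⋆ · ρ̄. -/

import Mathlib

open MeasureTheory ProbabilityTheory

lemma integral_cond_eq' {Ω : Type*} [MeasurableSpace Ω] (μ : Measure Ω) (s : Set Ω) (f : Ω → ℝ) :
    ∫ ω, f ω ∂(μ[|s]) = (μ s).toReal⁻¹ * ∫ ω in s, f ω ∂μ := by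
  rw [ProbabilityTheory.cond, integral_smul_measure, ENNReal.toReal_inv, smul_eq_mul]

/-- Under full unconfoundedness (E[Y1 | Z = 1] = E[Y1], E[Y0 | Z' = 0, Z = 0] = E[Y0] and
E[Y1 | Z' = 1, Z = 0] = E[Y1]), the treatment diffusion bias is
b = (E[Y0] − E[Y1])·ρ̄ = −τ⋆·ρ̄. -/
theorem diffusion_bias_unconfounded_formula
    {Ω : Type*} [MeasurableSpace Ω] (μ : Measure Ω) [IsProbabilityMeasure μ]
    (Z Z' : Ω → ℝ) (hZ : Measurable Z) (hZ' : Measurable Z')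
    (hZ01 : ∀ ω, Z ω = 0 ∨ Z ω = 1) (hZ'01 : ∀ ω, Z' ω = 0 ∨ Z' ω = 1)
    (Y0 Y1 Y : Ω → ℝ) (hY0 : Integrable Y0 μ) (hY1 : Integrable Y1 μ)
    (hY : ∀ ω, Y ω = Z' ω * Y1 ω + (1 - Z' ω) * Y0 ω)
    (hZpos : 0 < μ {ω | Z ω = 1}) (hZlt : μ {ω | Z ω = 1} < 1)
    (hmono : μ[|{ω | Z ω = 1}] {ω | Z' ω = 1} = 1)
    (ρ : ℝ) (hρ : ρ = (μ[|{ω | Z ω = 0}] {ω | Z' ω = 1}).toReal)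
    (hρ0 : 0 < ρ) (hρ1 : ρ < 1)
    (τstar τnodiff b : ℝ)
    (hτstar : τstar = ∫ ω, Y1 ω ∂μ - ∫ ω, Y0 ω ∂μ)
    (hτnodiff : τnodiff = ∫ ω, Y ω ∂(μ[|{ω | Z ω = 1}]) - ∫ ω, Y ω ∂(μ[|{ω | Z ω = 0}]))
    (hb : b = τnodiff - τstar)
    (hrand : ∫ ω, Y1 ω ∂(μ[|{ω | Z ω = 1}]) = ∫ ω, Y1 ω ∂μ)
    (hunc0 : ∫ ω, Y0 ω ∂(μ[|{ω | Z' ω = 0 ∧ Z ω = 0}]) = ∫ ω, Y0 ω ∂μ)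
    (hunc1 : ∫ ω, Y1 ω ∂(μ[|{ω | Z' ω = 1 ∧ Z ω = 0}]) = ∫ ω, Y1 ω ∂μ) :
    b = (∫ ω, Y0 ω ∂μ - ∫ ω, Y1 ω ∂μ) * ρ ∧ b = -τstar * ρ := by
  set A := {ω | Z ω = 1} with hAdef
  set B := {ω | Z ω = 0} with hBdef
  set T := {ω | Z' ω = 1} with hTdef
  set S1 := {ω | Z' ω = 1 ∧ Z ω = 0} with hS1def
  set S0 := {ω | Z' ω = 0 ∧ Z ω = 0} with hS0def
  set E0 := ∫ ω, Y0 ω ∂μ with hE0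
  set E1 := ∫ ω, Y1 ω ∂μ with hE1
  have hA : MeasurableSet A := measurableSet_eq_fun hZ measurable_const
  have hB : MeasurableSet B := measurableSet_eq_fun hZ measurable_const
  have hT : MeasurableSet T := measurableSet_eq_fun hZ' measurable_const
  have hTc : MeasurableSet {ω | Z' ω = 0} := measurableSet_eq_fun hZ' measurable_const
  have hS1 : MeasurableSet S1 := by
    have : S1 = T ∩ B := by ext ω; simp [hS1def, hTdef, hBdef]
    rw [this]; exact hT.inter hB
  have hS0 : MeasurableSet S0 := by
    have : S0 = {ω | Z' ω = 0} ∩ B := by ext ω; simp [hS0def, hBdef]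
    rw [this]; exact hTc.inter hB
  -- basic measure facts
  have hμA0 : μ A ≠ 0 := hZpos.ne'
  have hμAtop : μ A ≠ ⊤ := (lt_of_lt_of_le hZlt le_top).ne
  have hBc : B = Aᶜ := by
    ext ω
    simp only [hAdef, hBdef, Set.mem_setOf_eq, Set.mem_compl_iff]
    constructor
    · intro h h1; rw [h1] at h; norm_num at h
    · intro h; rcases hZ01 ω with h0 | h1
      · exact h0
      · exact absurd h1 h
  have hμB : μ B = 1 - μ A := by rw [hBc, prob_compl_eq_one_sub hA]
  have hμB0 : μ B ≠ 0 := by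
    rw [hμB]; exact (tsub_pos_of_lt hZlt).ne'
  have hμBtop : μ B ≠ ⊤ := measure_ne_top μ B
  have haB : (0:ℝ) < (μ B).toReal := ENNReal.toReal_pos hμB0 hμBtop
  have haA : (0:ℝ) < (μ A).toReal := ENNReal.toReal_pos hμA0 hμAtop
  -- ρ and μ S1
  have hBT : B ∩ T = S1 := by ext ω; simp [hS1def, hTdef, hBdef, and_comm]
  have hμS1 : (μ S1).toReal = ρ * (μ B).toReal := by
    rw [hρ, cond_apply hB, hBT, ENNReal.toReal_mul, ENNReal.toReal_inv]
    field_simp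
  have hμS1_0 : μ S1 ≠ 0 := by
    intro h
    rw [h, ENNReal.toReal_zero] at hμS1
    nlinarith
  -- S0, S1 partition B
  have hdisj : Disjoint S1 S0 := by
    rw [Set.disjoint_left]
    rintro ω ⟨h1, _⟩ ⟨h0, _⟩
    rw [h1] at h0; norm_num at h0
  have hU : S1 ∪ S0 = B := by
    ext ω
    simp only [hS1def, hS0def, hBdef, Set.mem_union, Set.mem_setOf_eq]
    constructor
    · rintro (⟨_, h⟩ | ⟨_, h⟩) <;> exact h
    · intro h; rcases hZ'01 ω with h0 | h1
      · right; exact ⟨h0, h⟩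
      · left; exact ⟨h1, h⟩
  have hsum : μ S1 + μ S0 = μ B := by rw [← measure_union hdisj hS0, hU]
  have hμS0 : (μ S0).toReal = (1 - ρ) * (μ B).toReal := by
    have := congrArg ENNReal.toReal hsum
    rw [ENNReal.toReal_add (measure_ne_top μ S1) (measure_ne_top μ S0)] at this
    rw [hμS1] at this; linarith
  have hμS0_0 : μ S0 ≠ 0 := by
    intro h
    rw [h, ENNReal.toReal_zero] at hμS0
    nlinarith
  -- integrability of Y
  have hYint : Integrable Y μ := by
    have h1 : Integrable (fun ω => Z' ω * Y1 ω) μ := by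
      refine hY1.bdd_mul hZ'.aestronglyMeasurable (c := 1) (Filter.Eventually.of_forall fun ω => ?_)
      rcases hZ'01 ω with h | h <;> simp [h]
    have h2 : Integrable (fun ω => (1 - Z' ω) * Y0 ω) μ := by
      refine hY0.bdd_mul (measurable_const.sub hZ').aestronglyMeasurable (c := 1) (Filter.Eventually.of_forall fun ω => ?_)
      rcases hZ'01 ω with h | h <;> simp [h]
    exact (h1.add h2).congr (Filter.Eventually.of_forall fun ω => (hY ω).symm)
  -- on A, Y = Y1 a.e.
  have hAT : μ (A ∩ T) = μ A := by
    have hc := cond_apply hA μ T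
    rw [hmono] at hc
    calc μ (A ∩ T) = μ A * ((μ A)⁻¹ * μ (A ∩ T)) := by
          rw [← mul_assoc, ENNReal.mul_inv_cancel hμA0 hμAtop, one_mul]
      _ = μ A * 1 := by rw [← hc]
      _ = μ A := mul_one _
  have hAdiff : μ (A \ T) = 0 := by
    have h := measure_inter_add_diff A hT (μ := μ)
    rw [hAT] at h
    have : μ A + μ (A \ T) = μ A + 0 := by rw [add_zero]; exact h
    exact (ENNReal.add_right_inj hμAtop).mp this
  have hintA : ∫ ω in A, Y ω ∂μ = ∫ ω in A, Y1 ω ∂μ := by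
    apply setIntegral_congr_ae hA
    have : ∀ᵐ ω ∂μ, ω ∉ A \ T := by
      rw [← compl_mem_ae_iff] at hAdiff
      exact hAdiff
    filter_upwards [this] with ω hω hωA
    have hωT : ω ∈ T := by by_contra h; exact hω ⟨hωA, h⟩
    have h1 : Z' ω = 1 := hωT
    rw [hY ω, h1]; ring
  -- on S1, Y = Y1; on S0, Y = Y0
  have hintS1 : ∫ ω in S1, Y ω ∂μ = ∫ ω in S1, Y1 ω ∂μ := by
    apply setIntegral_congr_fun hS1
    rintro ω ⟨h1, _⟩
    rw [hY ω, h1]; ring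
  have hintS0 : ∫ ω in S0, Y ω ∂μ = ∫ ω in S0, Y0 ω ∂μ := by
    apply setIntegral_congr_fun hS0
    rintro ω ⟨h0, _⟩
    rw [hY ω, h0]; ring
  -- set integral values from unconfoundedness
  have hS1val : ∫ ω in S1, Y1 ω ∂μ = (μ S1).toReal * E1 := by
    rw [integral_cond_eq'] at hunc1
    have hne : (μ S1).toReal ≠ 0 :=
      (ENNReal.toReal_pos hμS1_0 (measure_ne_top μ S1)).ne'
    field_simp at hunc1 ⊢
    linarith [hunc1]
  have hS0val : ∫ ω in S0, Y0 ω ∂μ = (μ S0).toReal * E0 := by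
    rw [integral_cond_eq'] at hunc0
    have hne : (μ S0).toReal ≠ 0 :=
      (ENNReal.toReal_pos hμS0_0 (measure_ne_top μ S0)).ne'
    field_simp at hunc0 ⊢
    linarith [hunc0]
  -- E[Y | Z = 1] = E1
  have hEY1 : ∫ ω, Y ω ∂(μ[|A]) = E1 := by
    rw [integral_cond_eq', hintA, ← integral_cond_eq', hrand]
  -- E[Y | Z = 0] = ρ E1 + (1 - ρ) E0
  have hEY0 : ∫ ω, Y ω ∂(μ[|B]) = ρ * E1 + (1 - ρ) * E0 := by
    rw [integral_cond_eq']
    have hsplit : ∫ ω in B, Y ω ∂μ = ∫ ω in S1, Y ω ∂μ + ∫ ω in S0, Y ω ∂μ := by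
      rw [← hU, setIntegral_union hdisj hS0 hYint.integrableOn hYint.integrableOn]
    rw [hsplit, hintS1, hintS0, hS1val, hS0val, hμS1, hμS0]
    field_simp
  rw [hτnodiff, hEY1, hEY0] at hb
  rw [hτstar] at hb
  constructor
  · rw [hb]; ring
  · rw [hb, hτstar]; ring
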